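/- arXiv:1909.05113 — 2 statements merged into one kernel-verified Lean document; each statement's English description precedes it below -/
import Mathlib

section
/- Let X be a Polish space, T > 0, and let (κ_t)_{t∈[0,T]} be a family of Markov kernels on X satisfying the compact containment condition: for every compact set K ⊆ X and every ε > 0 there exists a compact set K' ⊆ X such that κ_t(x, K') ≥ 1 − ε for all x ∈ K and all t ∈ [0,T]. If (f_n) is a sequence in C_b(X) and f ∈ C_b(X) with sup_n ‖f_n‖_∞ < ∞ and f_n → f uniformly on every compact subset of X, then for every compact set K ⊆ X one has sup_{t∈[0,T]} sup_{x∈K} |∫ f_n dκ_t(x,·) − ∫ f dκ_t(x,·)| → 0 as n → ∞. (This is the content of Lemma 3.3: the transition semigroup S(t)f(x) = ∫ f dκ_t(x,·) is locally equi-continuous for the strict topology.) -/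
open MeasureTheory Filter Topology

/-- local equi-continuity of the transition semigroup for the strict topology,
under compact containment. -/
theorem stmt_0
    {X : Type*} [TopologicalSpace X] [PolishSpace X]
    [MeasurableSpace X] [BorelSpace X]
    (T : ℝ) (hT : 0 < T)
    (κ : ℝ → X → Measure X)
    (hmeas : ∀ t ∈ Set.Icc (0:ℝ) T, Measurable (κ t))
    (hprob : ∀ t ∈ Set.Icc (0:ℝ) T, ∀ x, IsProbabilityMeasure (κ t x))
    (hcc : ∀ K : Set X, IsCompact K → ∀ ε > (0:ℝ), ∃ K' : Set X, IsCompact K' ∧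
      ∀ x ∈ K, ∀ t ∈ Set.Icc (0:ℝ) T, ENNReal.ofReal (1 - ε) ≤ κ t x K')
    (fseq : ℕ → BoundedContinuousFunction X ℝ) (f : BoundedContinuousFunction X ℝ)
    (hbdd : ∃ C : ℝ, ∀ n, ‖fseq n‖ ≤ C)
    (hconv : ∀ K : Set X, IsCompact K →
      TendstoUniformlyOn (fun n x => fseq n x) (fun x => f x) atTop K) :
    ∀ K : Set X, IsCompact K → ∀ ε > (0:ℝ), ∃ N : ℕ, ∀ n ≥ N,
      ∀ t ∈ Set.Icc (0:ℝ) T, ∀ x ∈ K,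
        |(∫ y, fseq n y ∂(κ t x)) - ∫ y, f y ∂(κ t x)| < ε := by
  intro K hK ε hε
  obtain ⟨C, hC⟩ := hbdd
  set D : ℝ := |C| + ‖f‖ with hD
  have hD0 : 0 ≤ D := add_nonneg (abs_nonneg _) (norm_nonneg _)
  set ε' : ℝ := ε / (4 * (D + 1)) with hε'
  have hε'pos : 0 < ε' := div_pos hε (by positivity)
  obtain ⟨K', hK', hK'cc⟩ := hcc K hK ε' hε'pos
  -- uniform convergence on K'
  have hu := hconv K' hK'
  rw [Metric.tendstoUniformlyOn_iff] at hu
  obtain ⟨N, hN⟩ := (hu (ε / 4) (by positivity)).exists_forall_of_atTop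
  refine ⟨N, fun n hn t ht x hx => ?_⟩
  haveI : IsProbabilityMeasure (κ t x) := hprob t ht x
  set μ := κ t x with hμ
  -- bound on the complement measure
  have hcompl : (μ K'ᶜ).toReal ≤ ε' := by
    have h1 : ENNReal.ofReal (1 - ε') ≤ μ K' := hK'cc x hx t ht
    have h2 : μ K'ᶜ = 1 - μ K' := by
      rw [measure_compl hK'.measurableSet (measure_ne_top _ _), measure_univ]
    have h3 : μ K'ᶜ ≤ ENNReal.ofReal ε' := by
      rw [h2]
      rw [tsub_le_iff_right]
      calc (1 : ENNReal) = ENNReal.ofReal (ε' + (1 - ε')) := by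
            rw [show ε' + (1 - ε') = 1 by ring, ENNReal.ofReal_one]
        _ ≤ ENNReal.ofReal ε' + ENNReal.ofReal (1 - ε') := ENNReal.ofReal_add_le
        _ ≤ ENNReal.ofReal ε' + μ K' := add_le_add_right h1 _
    calc (μ K'ᶜ).toReal ≤ (ENNReal.ofReal ε').toReal :=
          ENNReal.toReal_mono ENNReal.ofReal_ne_top h3
      _ = ε' := ENNReal.toReal_ofReal hε'pos.le
  -- integrability
  have hint : Integrable (fun y => fseq n y - f y) μ := (fseq n - f).integrable μ
  have hsplit : (∫ y, fseq n y ∂μ) - ∫ y, f y ∂μ = ∫ y, fseq n y - f y ∂μ :=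
    (integral_sub ((fseq n).integrable μ) (f.integrable μ)).symm
  rw [hsplit]
  have hdecomp : (∫ y, fseq n y - f y ∂μ) =
      (∫ y in K', fseq n y - f y ∂μ) + ∫ y in K'ᶜ, fseq n y - f y ∂μ :=
    (integral_add_compl hK'.measurableSet hint).symm
  have hb1 : ‖∫ y in K', fseq n y - f y ∂μ‖ ≤ (ε / 4) * (μ K').toReal := by
    refine norm_setIntegral_le_of_norm_le_const (measure_lt_top _ _) ?_
    · intro y hy
      have := hN n hn y hy
      rw [Real.dist_eq] at this
      rw [Real.norm_eq_abs, abs_sub_comm]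
      exact this.le
  have hb2 : ‖∫ y in K'ᶜ, fseq n y - f y ∂μ‖ ≤ D * (μ K'ᶜ).toReal := by
    refine norm_setIntegral_le_of_norm_le_const (measure_lt_top _ _) ?_
    · intro y _
      have h1 : |fseq n y| ≤ |C| := le_trans ((fseq n).norm_coe_le_norm y)
        (le_trans (hC n) (le_abs_self C))
      have h2 : |f y| ≤ ‖f‖ := f.norm_coe_le_norm y
      calc ‖fseq n y - f y‖ ≤ |fseq n y| + |f y| := abs_sub _ _
        _ ≤ D := add_le_add h1 h2
  have hμK' : (μ K').toReal ≤ 1 := by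
    have := ENNReal.toReal_mono ENNReal.one_ne_top (prob_le_one (μ := μ) (s := K'))
    simpa using this
  calc |∫ y, fseq n y - f y ∂μ|
      ≤ ‖∫ y in K', fseq n y - f y ∂μ‖ + ‖∫ y in K'ᶜ, fseq n y - f y ∂μ‖ := by
        rw [hdecomp]; exact abs_add_le _ _
    _ ≤ (ε / 4) * (μ K').toReal + D * (μ K'ᶜ).toReal := add_le_add hb1 hb2
    _ ≤ (ε / 4) * 1 + D * ε' := by
        refine add_le_add (mul_le_mul_of_nonneg_left hμK' (by positivity))
          (mul_le_mul_of_nonneg_left hcompl hD0)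
    _ < ε := by
        have key : (D + 1) * ε' = ε / 4 := by
          rw [show ε' = ε / (4 * (D + 1)) from rfl]
          field_simp
        have hDε : D * ε' ≤ ε / 4 := by
          nlinarith [hε'pos.le]
        linarith
end

section
/- Let X be a locally compact Polish space and (κ_t)_{t≥0} a semigroup of Markov kernels on X (κ_0(x,·) = δ_x and κ_{t+s} = κ_t κ_s) such that the maps S(t)f(x) := ∫ f dκ_t(x,·) send C_0(X) into C_0(X) and (S(t))_{t≥0} is strongly continuous on (C_0(X), ‖·‖_∞), i.e. ‖S(t)f − f‖_∞ → 0 as t ↓ 0 for every f ∈ C_0(X). Then for every T > 0 and every compact set Γ of Borel probability measures on X (compact for the topology of weak convergence), the set {μ κ_t : μ ∈ Γ, 0 ≤ t ≤ T} is relatively compact in the topology of weak convergence; equivalently (by Prohorov's theorem) it is uniformly tight. (This is the key equi-continuity/tightness step in the proof of the second statement of Theorem 4.1.) -/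
open MeasureTheory Filter Topology

section Aux

open Set ENNReal NNReal

variable {X : Type*} [TopologicalSpace X] [PolishSpace X]
  [MeasurableSpace X] [BorelSpace X]

lemma aux_compact_tight (Γ : Set (ProbabilityMeasure X)) (hΓ : IsCompact Γ)
    {ε : ℝ} (hε : 0 < ε) :
    ∃ K : Set X, IsCompact K ∧ ∀ μ ∈ Γ, (μ : Measure X) Kᶜ ≤ ENNReal.ofReal ε := by
  by_cases hX : Nonempty X
  swap
  · refine ⟨∅, isCompact_empty, fun μ _ => ?_⟩
    haveI : IsEmpty X := not_nonempty_iff.mp hX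
    have h1 : (μ : Measure X) univ = 1 := measure_univ
    rw [Set.univ_eq_empty_iff.mpr ‹IsEmpty X›] at h1
    simp at h1
  letI := TopologicalSpace.upgradeIsCompletelyMetrizable X
  obtain ⟨u, hu⟩ := TopologicalSpace.exists_dense_seq X
  -- lower semicontinuity of measures of open sets
  have lsc : ∀ (G : Set X), IsOpen G → ∀ c : ℝ≥0∞,
      IsOpen {ν : ProbabilityMeasure X | c < (ν : Measure X) G} := by
    intro G hG c
    rw [isOpen_iff_mem_nhds]
    intro μ hμ
    have h1 : (μ : Measure X) G
        ≤ liminf (fun ν : ProbabilityMeasure X => (ν : Measure X) G) (𝓝 μ) :=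
      ProbabilityMeasure.le_liminf_measure_open_of_tendsto tendsto_id hG
    exact Filter.eventually_lt_of_lt_liminf (lt_of_lt_of_le hμ h1)
  -- the basic covering claim
  have key : ∀ (n : ℕ) (δ : ℝ), 0 < δ → ∃ Nn : ℕ, ∀ μ ∈ Γ,
      1 - ENNReal.ofReal δ
        < (μ : Measure X) (⋃ i ∈ Finset.range Nn, Metric.ball (u i) (1/(n+1))) := by
    intro n δ hδ
    set U : ℕ → Set X := fun Nn => ⋃ i ∈ Finset.range Nn, Metric.ball (u i) (1/(n+1)) with hU
    have hUopen : ∀ Nn, IsOpen (U Nn) := fun Nn =>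
      isOpen_biUnion fun i _ => Metric.isOpen_ball
    have hUmono : Monotone U := by
      intro a b hab x hx
      obtain ⟨i, hi, hxi⟩ := Set.mem_iUnion₂.mp hx
      exact Set.mem_iUnion₂.mpr ⟨i, Finset.mem_range.mpr
        (lt_of_lt_of_le (Finset.mem_range.mp hi) hab), hxi⟩
    have hUcover : ⋃ Nn, U Nn = univ := by
      ext x
      simp only [Set.mem_iUnion, Set.mem_univ, iff_true]
      obtain ⟨i, hi⟩ := Metric.denseRange_iff.mp hu x (1/(n+1)) (by positivity)
      exact ⟨i+1, Set.mem_biUnion (Finset.self_mem_range_succ i)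
        (Metric.mem_ball.mpr hi)⟩
    set V : ℕ → Set (ProbabilityMeasure X) := fun Nn =>
      {ν : ProbabilityMeasure X | 1 - ENNReal.ofReal δ < (ν : Measure X) (U Nn)}
    have hVopen : ∀ Nn, IsOpen (V Nn) := fun Nn => lsc _ (hUopen Nn) _
    have hVmono : Monotone V := by
      intro a b hab ν hν
      exact lt_of_lt_of_le hν (measure_mono (hUmono hab))
    have hcover : Γ ⊆ ⋃ Nn, V Nn := by
      intro μ _
      have h1 : (μ : Measure X) (⋃ Nn, U Nn) = ⨆ Nn, (μ : Measure X) (U Nn) :=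
        Directed.measure_iUnion hUmono.directed_le
      have h2 : 1 - ENNReal.ofReal δ < ⨆ Nn, (μ : Measure X) (U Nn) := by
        rw [← h1, hUcover, measure_univ]
        exact ENNReal.sub_lt_self one_ne_top one_ne_zero
          (by simp [ENNReal.ofReal_eq_zero, not_le, hδ])
      obtain ⟨Nn, hNn⟩ := lt_iSup_iff.mp h2
      exact Set.mem_iUnion.mpr ⟨Nn, hNn⟩
    obtain ⟨t, ht⟩ := hΓ.elim_finite_subcover V hVopen hcover
    refine ⟨t.sup id, fun μ hμ => ?_⟩
    obtain ⟨Nn, hNn, hμN⟩ := Set.mem_iUnion₂.mp (ht hμ)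
    exact hVmono (Finset.le_sup (f := id) hNn) hμN
  choose N hN using fun n => key n (ε / 2 ^ (n + 1)) (by positivity)
  set S : Set X := ⋂ n, ⋃ i ∈ Finset.range (N n), Metric.ball (u i) (1/(n+1)) with hS
  refine ⟨closure S, ?_, ?_⟩
  · refine TotallyBounded.isCompact_of_isClosed ?_ isClosed_closure
    refine TotallyBounded.closure ?_
    rw [Metric.totallyBounded_iff]
    intro e he
    obtain ⟨n, hn⟩ := exists_nat_one_div_lt he
    refine ⟨u '' Set.Iio (N n), (Set.finite_Iio (N n)).image u, ?_⟩
    intro x hx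
    have hx1 : x ∈ ⋃ i ∈ Finset.range (N n), Metric.ball (u i) (1/(n+1)) :=
      Set.mem_iInter.mp hx n
    obtain ⟨i, hi, hxi⟩ := Set.mem_iUnion₂.mp hx1
    refine Set.mem_iUnion₂.mpr ⟨u i, ?_, ?_⟩
    · exact Set.mem_image_of_mem u (Finset.mem_range.mp hi)
    · exact Metric.ball_subset_ball hn.le hxi
  · intro μ hμ
    have hsub : (closure S)ᶜ ⊆ Sᶜ := Set.compl_subset_compl.mpr subset_closure
    refine le_trans (measure_mono hsub) ?_
    have h1 : (μ : Measure X) Sᶜ ≤ ∑' n, (μ : Measure X)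
        (⋃ i ∈ Finset.range (N n), Metric.ball (u i) (1/(n+1)))ᶜ := by
      rw [hS, Set.compl_iInter]
      exact measure_iUnion_le _
    have h2 : ∀ n, (μ : Measure X) (⋃ i ∈ Finset.range (N n), Metric.ball (u i) (1/(n+1)))ᶜ
        ≤ ENNReal.ofReal (ε / 2 ^ (n + 1)) := by
      intro n
      have hmeas' : MeasurableSet (⋃ i ∈ Finset.range (N n), Metric.ball (u i) (1/(n+1))) :=
        (isOpen_biUnion fun i _ => Metric.isOpen_ball).measurableSet
      rw [prob_compl_eq_one_sub hmeas']
      refine tsub_le_iff_right.mpr ?_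
      calc (1:ℝ≥0∞) ≤ (1 - ENNReal.ofReal (ε / 2 ^ (n + 1))) + ENNReal.ofReal (ε / 2 ^ (n + 1)) :=
            le_tsub_add
        _ ≤ _ := by rw [add_comm]; exact add_le_add_right (hN n μ hμ).le _
    calc (μ : Measure X) Sᶜ ≤ ∑' n, (μ : Measure X)
          (⋃ i ∈ Finset.range (N n), Metric.ball (u i) (1/(n+1)))ᶜ := h1
      _ ≤ ∑' n, ENNReal.ofReal (ε / 2 ^ (n + 1)) := ENNReal.tsum_le_tsum h2
      _ = ENNReal.ofReal ε := by
          have harith : ∀ n : ℕ, ε / 2 ^ (n + 1) = ε / 2 / 2 ^ n := fun n => by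
            rw [pow_succ]; ring
          simp only [harith]
          rw [← ENNReal.ofReal_tsum_of_nonneg (fun n => by positivity)
            (summable_geometric_two' ε)]
          rw [tsum_geometric_two' ε]

/-- Fubini-type identity for `Measure.bind` and bounded nonnegative continuous functions. -/
lemma aux_integral_bind (m : Measure X) [IsProbabilityMeasure m] (κ' : X → Measure X)
    (hκ : Measurable κ') (hκp : ∀ x, IsProbabilityMeasure (κ' x))
    {g : X → ℝ} (hg : Continuous g) (h0 : ∀ x, 0 ≤ g x) (h1 : ∀ x, g x ≤ 1) :
    ∫ y, g y ∂(m.bind κ') = ∫ x, ∫ y, g y ∂(κ' x) ∂m := by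
  haveI hbp : IsProbabilityMeasure (m.bind κ') := ⟨by
    rw [Measure.bind_apply MeasurableSet.univ hκ.aemeasurable,
      lintegral_congr (fun x => (hκp x).measure_univ)]
    simp⟩
  have hint : ∀ (ν : Measure X), IsProbabilityMeasure ν → Integrable g ν := by
    intro ν hν
    haveI := hν
    refine (integrable_const (1:ℝ)).mono' hg.aestronglyMeasurable (ae_of_all _ fun x => ?_)
    rw [Real.norm_eq_abs, abs_of_nonneg (h0 x)]
    exact h1 x
  set G : X → ℝ := fun x => ∫ y, g y ∂(κ' x) with hGdef
  have hGof : ∀ x, ENNReal.ofReal (G x) = ∫⁻ y, ENNReal.ofReal (g y) ∂(κ' x) := fun x =>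
    ofReal_integral_eq_lintegral_ofReal (hint _ (hκp x)) (ae_of_all _ h0)
  have hlm : Measurable fun x => ∫⁻ y, ENNReal.ofReal (g y) ∂(κ' x) :=
    (Measure.measurable_lintegral (ENNReal.measurable_ofReal.comp hg.measurable)).comp hκ
  have hG0 : ∀ x, 0 ≤ G x := fun x => integral_nonneg h0
  have hGm : Measurable G := by
    have hGeq : G = fun x => (∫⁻ y, ENNReal.ofReal (g y) ∂(κ' x)).toReal := by
      funext x
      rw [← hGof x, ENNReal.toReal_ofReal (hG0 x)]
    rw [hGeq]
    exact hlm.ennreal_toReal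
  have hG1 : ∀ x, G x ≤ 1 := by
    intro x
    haveI := hκp x
    calc G x ≤ ∫ _y, (1:ℝ) ∂(κ' x) := integral_mono (hint _ (hκp x)) (integrable_const 1) h1
      _ = 1 := by simp
  have hGint : Integrable G m := by
    refine (integrable_const (1:ℝ)).mono' hGm.aestronglyMeasurable (ae_of_all _ fun x => ?_)
    rw [Real.norm_eq_abs, abs_of_nonneg (hG0 x)]
    exact hG1 x
  have hchain : ENNReal.ofReal (∫ y, g y ∂(m.bind κ')) = ENNReal.ofReal (∫ x, G x ∂m) := by
    calc ENNReal.ofReal (∫ y, g y ∂(m.bind κ'))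
        = ∫⁻ y, ENNReal.ofReal (g y) ∂(m.bind κ') :=
          ofReal_integral_eq_lintegral_ofReal (hint _ hbp) (ae_of_all _ h0)
      _ = ∫⁻ x, ∫⁻ y, ENNReal.ofReal (g y) ∂(κ' x) ∂m :=
          Measure.lintegral_bind hκ.aemeasurable (ENNReal.measurable_ofReal.comp hg.measurable).aemeasurable
      _ = ∫⁻ x, ENNReal.ofReal (G x) ∂m := lintegral_congr fun x => (hGof x).symm
      _ = ENNReal.ofReal (∫ x, G x ∂m) :=
          (ofReal_integral_eq_lintegral_ofReal hGint (ae_of_all _ hG0)).symm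
  have := congrArg ENNReal.toReal hchain
  rwa [ENNReal.toReal_ofReal (integral_nonneg h0), ENNReal.toReal_ofReal (integral_nonneg hG0)]
    at this

end Aux

open Set ENNReal NNReal in
/-- uniform tightness of `{μ κ_t : μ ∈ Γ, 0 ≤ t ≤ T}` for a strongly continuous
`C₀`-preserving Markov transition semigroup and weakly compact `Γ`. -/
theorem stmt_5
    {X : Type*} [TopologicalSpace X] [PolishSpace X] [LocallyCompactSpace X]
    [MeasurableSpace X] [BorelSpace X]
    (κ : ℝ → X → Measure X)
    (hmeas : ∀ t, Measurable (κ t))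
    (hprob : ∀ t x, IsProbabilityMeasure (κ t x))
    (hzero : ∀ x, κ 0 x = Measure.dirac x)
    (hsemi : ∀ t ≥ (0:ℝ), ∀ s ≥ (0:ℝ), ∀ x, κ (t + s) x = (κ t x).bind (κ s))
    (hC0 : ∀ t ≥ (0:ℝ), ∀ f : ZeroAtInftyContinuousMap X ℝ,
      ∃ g : ZeroAtInftyContinuousMap X ℝ, ∀ x, (∫ y, f y ∂(κ t x)) = g x)
    (hsc : ∀ f : ZeroAtInftyContinuousMap X ℝ,
      Tendsto (fun t => ⨆ x, |(∫ y, f y ∂(κ t x)) - f x|)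
        (nhdsWithin 0 (Set.Ioi 0)) (nhds 0)) :
    ∀ T > (0:ℝ), ∀ Γ : Set (ProbabilityMeasure X), IsCompact Γ →
      ∀ ε > (0:ℝ), ∃ K : Set X, IsCompact K ∧
        ∀ μ ∈ Γ, ∀ t ∈ Set.Icc (0:ℝ) T,
          ENNReal.ofReal (1 - ε) ≤ ((μ : Measure X).bind (κ t)) K := by
  intro T hT Γ hΓ ε hε
  -- trivial case `1 ≤ ε`
  rcases le_or_gt 1 ε with hε1 | hε1
  · exact ⟨∅, isCompact_empty, fun μ _ t _ => by
      simp [ENNReal.ofReal_eq_zero.mpr (by linarith : 1 - ε ≤ 0)]⟩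
  -- trivial case `X` empty
  by_cases hX : Nonempty X
  swap
  · refine ⟨∅, isCompact_empty, fun μ _ t _ => ?_⟩
    haveI : IsEmpty X := not_nonempty_iff.mp hX
    have h1 : (μ : Measure X) univ = 1 := measure_univ
    rw [Set.univ_eq_empty_iff.mpr ‹IsEmpty X›] at h1
    simp at h1
  set δ : ℝ := ε / 8 with hδdef
  have hδ : 0 < δ := by positivity
  -- uniform tightness of Γ
  obtain ⟨K₀, hK₀c, hK₀⟩ := aux_compact_tight Γ hΓ (show (0:ℝ) < ε/2 by positivity)
  -- compact exhaustion and monotone cutoff functions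
  set W := CompactExhaustion.choice X with hWdef
  have hfex : ∀ n : ℕ, ∃ f : C(X, ℝ), EqOn f 1 (W n) ∧ EqOn f 0 (interior (W (n+1)))ᶜ ∧
      HasCompactSupport f ∧ ∀ x, f x ∈ Icc (0:ℝ) 1 := by
    intro n
    refine exists_continuous_one_zero_of_isCompact (W.isCompact n)
      isOpen_interior.isClosed_compl ?_
    exact Set.disjoint_left.mpr fun x hx hx' => hx' (W.subset_interior_succ n hx)
  choose f hf1 hf0 hfc hf01 using hfex
  have hf0' : ∀ n x, 0 ≤ f n x := fun n x => (hf01 n x).1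
  have hf1' : ∀ n x, f n x ≤ 1 := fun n x => (hf01 n x).2
  have hfabs : ∀ n x, |f n x| ≤ 1 := fun n x => abs_le.mpr ⟨by linarith [hf0' n x], hf1' n x⟩
  have hfmono : ∀ (m n : ℕ), m ≤ n → ∀ x, f m x ≤ f n x := by
    intro m n hmn x
    have step : ∀ k, f k x ≤ f (k+1) x := by
      intro k
      by_cases hx : f k x = 0
      · rw [hx]; exact hf0' (k+1) x
      · have hx1 : x ∈ interior (W (k+1)) := by
          by_contra hxc
          exact hx (hf0 k hxc)
        have h1 : f (k+1) x = 1 := hf1 (k+1) (interior_subset hx1)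
        rw [h1]
        exact hf1' k x
    exact monotone_nat_of_le_succ step hmn
  have hftend : ∀ x, ∀ᶠ n in atTop, f n x = 1 := by
    intro x
    obtain ⟨m, hm⟩ : ∃ m, x ∈ W m := ⟨W.find x, W.mem_find x⟩
    filter_upwards [eventually_ge_atTop m] with n hn
    exact hf1 n (W.subset hn hm)
  -- `C₀` versions
  set fC0 : ℕ → ZeroAtInftyContinuousMap X ℝ :=
    fun n => ⟨f n, (hfc n).is_zero_at_infty⟩ with hfC0def
  have hcoe : ∀ n, ⇑(fC0 n) = ⇑(f n) := fun n => rfl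
  -- basic facts about `x ↦ ∫ f n dκ s x`
  have hfint : ∀ (ν : Measure X), IsProbabilityMeasure ν → ∀ n, Integrable (⇑(f n)) ν := by
    intro ν hν n
    haveI := hν
    refine (integrable_const (1:ℝ)).mono' (f n).continuous.aestronglyMeasurable
      (ae_of_all _ fun x => ?_)
    rw [Real.norm_eq_abs]
    exact hfabs n x
  have hS0 : ∀ (s:ℝ) x n, 0 ≤ ∫ y, f n y ∂(κ s x) := fun s x n => integral_nonneg (hf0' n)
  have hS1 : ∀ (s:ℝ) x n, (∫ y, f n y ∂(κ s x)) ≤ 1 := by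
    intro s x n
    haveI := hprob s x
    calc (∫ y, f n y ∂(κ s x)) ≤ ∫ _y, (1:ℝ) ∂(κ s x) :=
          integral_mono (hfint _ (hprob s x) n) (integrable_const 1) (hf1' n)
      _ = 1 := by simp
  have hScont : ∀ (s:ℝ), 0 ≤ s → ∀ n, Continuous fun x => ∫ y, f n y ∂(κ s x) := by
    intro s hs n
    obtain ⟨g, hg⟩ := hC0 s hs (fC0 n)
    have hEq : (fun x => ∫ y, f n y ∂(κ s x)) = fun x => g x := by
      funext x
      rw [← hg x]
      rfl
    rw [hEq]
    exact map_continuous g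
  have hSint : ∀ (r:ℝ), 0 ≤ r → ∀ n (ν : Measure X), IsProbabilityMeasure ν →
      Integrable (fun z => ∫ y, f n y ∂(κ r z)) ν := by
    intro r hr n ν hν
    haveI := hν
    refine (integrable_const (1:ℝ)).mono' (hScont r hr n).aestronglyMeasurable
      (ae_of_all _ fun z => ?_)
    rw [Real.norm_eq_abs, abs_of_nonneg (hS0 r z n)]
    exact hS1 r z n
  -- pointwise semigroup property for integrals
  have hsg : ∀ (a r : ℝ), 0 ≤ a → 0 ≤ r → ∀ n x,
      (∫ y, f n y ∂(κ (a + r) x)) = ∫ z, (∫ y, f n y ∂(κ r z)) ∂(κ a x) := by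
    intro a r ha hr n x
    rw [hsemi a ha r hr x]
    haveI := hprob a x
    exact aux_integral_bind (κ a x) (κ r) (hmeas r) (hprob r)
      (f n).continuous (hf0' n) (hf1' n)
  -- strong continuity: uniform-in-space bound for small times
  have hsup : ∀ n, ∃ h : ℝ, 0 < h ∧ ∀ r, 0 < r → r ≤ h → ∀ y,
      |(∫ z, f n z ∂(κ r y)) - f n y| ≤ δ := by
    intro n
    have h2 : ∀ᶠ r in 𝓝[>] (0:ℝ),
        (⨆ x, |(∫ y, (fC0 n) y ∂(κ r x)) - (fC0 n) x|) < δ :=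
      (hsc (fC0 n)).eventually (eventually_lt_nhds hδ)
    obtain ⟨h, hh, hsub⟩ := mem_nhdsGT_iff_exists_Ioc_subset.mp h2
    refine ⟨h, hh, fun r hr hrh y => ?_⟩
    have hbdd : BddAbove (Set.range fun x => |(∫ z, f n z ∂(κ r x)) - f n x|) := by
      refine ⟨2, fun v hv => ?_⟩
      obtain ⟨x, rfl⟩ := hv
      have h3 : |(∫ z, f n z ∂(κ r x))| ≤ 1 :=
        abs_le.mpr ⟨by linarith [hS0 r x n], hS1 r x n⟩
      calc |(∫ z, f n z ∂(κ r x)) - f n x|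
          ≤ |(∫ z, f n z ∂(κ r x))| + |f n x| := abs_sub _ _
        _ ≤ 2 := by linarith [hfabs n x]
    have hy : |(∫ z, f n z ∂(κ r y)) - f n y|
        ≤ ⨆ x, |(∫ z, f n z ∂(κ r x)) - f n x| :=
      le_ciSup hbdd y
    have hlt := hsub ⟨hr, hrh⟩
    rw [hcoe n] at hlt
    exact hy.trans hlt.le
  -- Dini-type step: a single cutoff works uniformly on `K₀` at a fixed time
  have hdini : ∀ (s:ℝ), 0 ≤ s → ∃ n, ∀ x ∈ K₀, 1 - δ ≤ ∫ y, f n y ∂(κ s x) := by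
    intro s hs
    set V : ℕ → Set X := fun n => {x | 1 - δ < ∫ y, f n y ∂(κ s x)} with hVdef
    have hVopen : ∀ n, IsOpen (V n) := fun n => isOpen_lt continuous_const (hScont s hs n)
    have hVmono : Monotone V := by
      intro a b hab x hx
      haveI := hprob s x
      have hmono : (∫ y, f a y ∂(κ s x)) ≤ ∫ y, f b y ∂(κ s x) :=
        integral_mono (hfint _ (hprob s x) a) (hfint _ (hprob s x) b) (hfmono a b hab)
      exact lt_of_lt_of_le hx hmono
    have hVcover : K₀ ⊆ ⋃ n, V n := by
      intro x _
      haveI := hprob s x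
      have hone : (∫ _y, (1:ℝ) ∂(κ s x)) = 1 := by simp
      have hlim : Tendsto (fun n => ∫ y, f n y ∂(κ s x)) atTop (𝓝 1) := by
        have hdom := tendsto_integral_of_dominated_convergence (μ := κ s x)
          (F := fun n y => f n y) (f := fun _ => (1:ℝ)) (fun _ => (1:ℝ))
          (fun n => (f n).continuous.aestronglyMeasurable)
          (integrable_const 1)
          (fun n => ae_of_all _ fun y => by rw [Real.norm_eq_abs]; exact hfabs n y)
          (ae_of_all _ fun y =>
            tendsto_const_nhds.congr' ((hftend y).mono fun n hn => hn.symm))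
        rwa [hone] at hdom
      have hev : ∀ᶠ n in atTop, 1 - δ < ∫ y, f n y ∂(κ s x) :=
        hlim.eventually (eventually_gt_nhds (by linarith))
      obtain ⟨n, hn⟩ := hev.exists
      exact Set.mem_iUnion.mpr ⟨n, hn⟩
    obtain ⟨tfin, htfin⟩ := hK₀c.elim_finite_subcover V hVopen hVcover
    refine ⟨tfin.sup id, fun x hx => ?_⟩
    obtain ⟨n, hn, hxn⟩ := Set.mem_iUnion₂.mp (htfin hx)
    exact (hVmono (Finset.le_sup (f := id) hn) hxn).le
  -- combine: for every `s ≥ 0` there are a cutoff and a time-window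
  have hdata : ∀ (s:ℝ), 0 ≤ s → ∃ (n : ℕ) (h : ℝ), 0 < h ∧
      (∀ x ∈ K₀, 1 - δ ≤ ∫ y, f n y ∂(κ s x)) ∧
      (∀ r, 0 < r → r ≤ h → ∀ y, |(∫ z, f n z ∂(κ r y)) - f n y| ≤ δ) := by
    intro s hs
    obtain ⟨n, hn⟩ := hdini s hs
    obtain ⟨h, hh, hhs⟩ := hsup n
    exact ⟨n, h, hh, hn, hhs⟩
  choose nn hh hhpos hhK hhsup using hdata
  -- finite subcover of `[0, T]` by the time-windows
  obtain ⟨tset, htset⟩ := (isCompact_Icc (a := (0:ℝ)) (b := T)).elim_nhds_subcover'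
    (fun s hs => Ioo (s - hh s hs.1) (s + hh s hs.1))
    (fun s hs => Ioo_mem_nhds (by linarith [hhpos s hs.1]) (by linarith [hhpos s hs.1]))
  refine ⟨⋃ j ∈ tset, tsupport (f (nn j.1 j.2.1)), ?_, ?_⟩
  · exact tset.finite_toSet.isCompact_biUnion fun j _ => hfc _
  · intro μ hμ t ht
    obtain ⟨j, hjt, htj⟩ := Set.mem_iUnion₂.mp (htset ht)
    set s : ℝ := j.1 with hsdef
    have hs0 : 0 ≤ s := j.2.1
    set n : ℕ := nn s j.2.1 with hndef
    have ht0 : 0 ≤ t := ht.1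
    have htjlt := htj
    simp only [Set.mem_Ioo] at htjlt
    -- key pointwise estimate
    have hkey : ∀ x, (∫ y, f n y ∂(κ s x)) - δ ≤ ∫ y, f n y ∂(κ t x) := by
      intro x
      rcases lt_trichotomy t s with hlt | heq | hgt
      · -- `s = t + (s - t)`
        have hr : 0 < s - t := by linarith
        have hrh : s - t ≤ hh s j.2.1 := by linarith [htjlt.1]
        have he : t + (s - t) = s := by ring
        have h1 := hsg t (s - t) ht0 hr.le n x
        rw [he] at h1
        haveI := hprob t x
        have hpt : ∀ z, (∫ y, f n y ∂(κ (s - t) z)) ≤ f n z + δ := by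
          intro z
          have := abs_le.mp (hhsup s j.2.1 (s - t) hr hrh z)
          linarith [this.2]
        have hgi : Integrable (fun z => f n z + δ) (κ t x) :=
          (hfint _ (hprob t x) n).add (integrable_const δ)
        have h2 : (∫ z, (∫ y, f n y ∂(κ (s - t) z)) ∂(κ t x)) ≤ ∫ z, (f n z + δ) ∂(κ t x) :=
          integral_mono (hSint (s - t) hr.le n _ (hprob t x)) hgi hpt
        have h3 : (∫ z, (f n z + δ) ∂(κ t x)) = (∫ y, f n y ∂(κ t x)) + δ := by
          rw [integral_add (hfint _ (hprob t x) n) (integrable_const δ)]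
          simp
        rw [h1]
        linarith
      · rw [heq]; linarith [hδ]
      · -- `t = s + (t - s)`
        have hr : 0 < t - s := by linarith
        have hrh : t - s ≤ hh s j.2.1 := by linarith [htjlt.2]
        have he : s + (t - s) = t := by ring
        have h1 := hsg s (t - s) hs0 hr.le n x
        rw [he] at h1
        haveI := hprob s x
        have hpt : ∀ z, f n z - δ ≤ ∫ y, f n y ∂(κ (t - s) z) := by
          intro z
          have := abs_le.mp (hhsup s j.2.1 (t - s) hr hrh z)
          linarith [this.1]
        have hgi : Integrable (fun z => f n z - δ) (κ s x) :=
          (hfint _ (hprob s x) n).sub (integrable_const δ)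
        have h2 : (∫ z, (f n z - δ) ∂(κ s x)) ≤ ∫ z, (∫ y, f n y ∂(κ (t - s) z)) ∂(κ s x) :=
          integral_mono hgi (hSint (t - s) hr.le n _ (hprob s x)) hpt
        have h3 : (∫ z, (f n z - δ) ∂(κ s x)) = (∫ y, f n y ∂(κ s x)) - δ := by
          rw [integral_sub (hfint _ (hprob s x) n) (integrable_const δ)]
          simp
        rw [h1]
        linarith
    -- lower bound, in `ℝ≥0∞`
    have hlow : ∀ x, K₀.indicator (fun _ => ENNReal.ofReal (1 - 2*δ)) x
        ≤ ENNReal.ofReal (∫ y, f n y ∂(κ t x)) := by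
      intro x
      by_cases hx : x ∈ K₀
      · rw [Set.indicator_of_mem hx]
        exact ENNReal.ofReal_le_ofReal (by linarith [hhK s j.2.1 x hx, hkey x])
      · rw [Set.indicator_of_notMem hx]
        exact zero_le
    have hμK₀ : 1 - ENNReal.ofReal (ε/2) ≤ (μ : Measure X) K₀ := by
      have h1 : (μ : Measure X) K₀ᶜᶜ = 1 - (μ : Measure X) K₀ᶜ :=
        prob_compl_eq_one_sub hK₀c.isClosed.measurableSet.compl
      rw [compl_compl] at h1
      rw [h1]
      exact tsub_le_tsub_left (hK₀ μ hμ) 1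
    have hsupp : tsupport (f n) ⊆ ⋃ j ∈ tset, tsupport (f (nn j.1 j.2.1)) :=
      Set.subset_biUnion_of_mem (u := fun j => tsupport (f (nn j.1 j.2.1))) hjt
    have hδ2 : (0:ℝ) ≤ 1 - 2*δ := by rw [hδdef]; linarith
    calc ENNReal.ofReal (1 - ε)
        ≤ ENNReal.ofReal (1 - 2*δ) * ENNReal.ofReal (1 - ε/2) := by
          rw [← ENNReal.ofReal_mul hδ2]
          apply ENNReal.ofReal_le_ofReal
          rw [hδdef]
          nlinarith [sq_nonneg ε]
      _ ≤ ENNReal.ofReal (1 - 2*δ) * ((μ : Measure X) K₀) := by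
          apply mul_le_mul_right
          refine le_trans (le_of_eq ?_) hμK₀
          rw [ENNReal.ofReal_sub 1 (by positivity), ENNReal.ofReal_one]
      _ = ∫⁻ x, K₀.indicator (fun _ => ENNReal.ofReal (1 - 2*δ)) x ∂(μ : Measure X) := by
          rw [lintegral_indicator_const hK₀c.isClosed.measurableSet]
      _ ≤ ∫⁻ x, ENNReal.ofReal (∫ y, f n y ∂(κ t x)) ∂(μ : Measure X) := lintegral_mono hlow
      _ = ∫⁻ x, (∫⁻ y, ENNReal.ofReal (f n y) ∂(κ t x)) ∂(μ : Measure X) :=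
          lintegral_congr fun x =>
            ofReal_integral_eq_lintegral_ofReal (hfint _ (hprob t x) n) (ae_of_all _ (hf0' n))
      _ = ∫⁻ y, ENNReal.ofReal (f n y) ∂((μ : Measure X).bind (κ t)) :=
          (Measure.lintegral_bind (hmeas t).aemeasurable
            (ENNReal.measurable_ofReal.comp (f n).continuous.measurable).aemeasurable).symm
      _ ≤ ∫⁻ y, (tsupport (f n)).indicator (fun _ => 1) y ∂((μ : Measure X).bind (κ t)) := by
          refine lintegral_mono fun y => ?_
          by_cases hy : y ∈ tsupport (f n)
          · rw [Set.indicator_of_mem hy]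
            exact ENNReal.ofReal_le_one.mpr (hf1' n y)
          · rw [Set.indicator_of_notMem hy, image_eq_zero_of_notMem_tsupport hy]
            simp
      _ = ((μ : Measure X).bind (κ t)) (tsupport (f n)) :=
          lintegral_indicator_one (isClosed_tsupport _).measurableSet
      _ ≤ ((μ : Measure X).bind (κ t)) (⋃ j ∈ tset, tsupport (f (nn j.1 j.2.1))) :=
          measure_mono hsupp
end
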